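/- arXiv:1906.05188 — 2 statements merged into one kernel-verified Lean document; each statement's English description precedes it below -/
import Mathlib

section
/- In the setting of the previous statement, for every ℓ ∈ {1,…,r}, the weighted projection error satisfies ∑_{j=1}^n αⱼ ‖yⱼ − ∑_{i=1}^ℓ ⟨yⱼ, Ψᵢ⟩_X Ψᵢ‖²_X = ∑_{i=ℓ+1}^r λᵢ. -/
/-!
Expanding each snapshot in the orthonormal family `Ψ` that spans the snapshot space, the
residual of the projection onto the first `ℓ` modes is the tail `∑_{i ≥ ℓ} ⟪y, Ψ i⟫ Ψ i`, whose
squared norm is `∑_{i ≥ ℓ} ⟪y, Ψ i⟫²` by Parseval. Summing with the weights and exchanging the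
sums leaves `∑_{i ≥ ℓ} ⟪R Ψ i, Ψ i⟫`, and `⟪R Ψ i, Ψ i⟫ = λ i` because `Ψ i` is a unit eigenvector.
-/

open RealInnerProductSpace Finset

section

variable {E ι κ : Type*} [NormedAddCommGroup E] [InnerProductSpace ℝ E]

namespace Orthonormal

variable {v : ι → E}

theorem sum_inner_smul_eq_of_mem_span [Fintype ι] (hv : Orthonormal ℝ v) {x : E}
    (hx : x ∈ Submodule.span ℝ (Set.range v)) : ∑ i, ⟪x, v i⟫ • v i = x := by
  obtain ⟨c, rfl⟩ := (Submodule.mem_span_range_iff_exists_fun ℝ).mp hx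
  simp only [hv.inner_left_fintype, conj_trivial]

theorem norm_sum_smul_sq (hv : Orthonormal ℝ v) (c : ι → ℝ) (s : Finset ι) :
    ‖∑ i ∈ s, c i • v i‖ ^ 2 = ∑ i ∈ s, c i ^ 2 := by
  rw [← real_inner_self_eq_norm_sq, hv.inner_sum]
  simp only [conj_trivial, sq]

theorem norm_sub_sum_inner_smul_sq_of_mem_span [Fintype ι] [DecidableEq ι] (hv : Orthonormal ℝ v)
    {x : E} (hx : x ∈ Submodule.span ℝ (Set.range v)) (s : Finset ι) :
    ‖x - ∑ i ∈ s, ⟪x, v i⟫ • v i‖ ^ 2 = ∑ i ∈ sᶜ, ⟪x, v i⟫ ^ 2 := by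
  have hexpand := hv.sum_inner_smul_eq_of_mem_span hx
  rw [← sum_add_sum_compl s] at hexpand
  nth_rw 1 [← hexpand]
  rw [add_sub_cancel_left]
  exact hv.norm_sum_smul_sq _ _

end Orthonormal

noncomputable def snapshotCorrelation [Fintype κ] (y : κ → E) (α : κ → ℝ) (ψ : E) : E :=
  ∑ j, (α j * ⟪ψ, y j⟫) • y j

theorem inner_snapshotCorrelation_self [Fintype κ] (y : κ → E) (α : κ → ℝ) (ψ : E) :
    ⟪snapshotCorrelation y α ψ, ψ⟫ = ∑ j, α j * ⟪y j, ψ⟫ ^ 2 := by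
  rw [snapshotCorrelation, sum_inner]
  refine sum_congr rfl fun j _ => ?_
  rw [real_inner_smul_left, real_inner_comm ψ]
  ring

theorem sum_mul_inner_sq_eq_of_snapshotCorrelation_eq_smul [Fintype κ] {y : κ → E} {α : κ → ℝ}
    {u : E} {μ : ℝ} (hu : ‖u‖ = 1) (h : snapshotCorrelation y α u = μ • u) :
    ∑ j, α j * ⟪y j, u⟫ ^ 2 = μ := by
  rw [← inner_snapshotCorrelation_self, h, real_inner_smul_left, real_inner_self_eq_norm_sq, hu,
    one_pow, mul_one]

end

theorem stmt7_general {X : Type*} [NormedAddCommGroup X] [InnerProductSpace ℝ X]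
    {n r : ℕ} (y : Fin n → X) (α : Fin n → ℝ)
    (Ψ : Fin r → X) (lam : Fin r → ℝ)
    (horth : Orthonormal ℝ Ψ)
    (heig : ∀ i, (∑ j, (α j * ⟪Ψ i, y j⟫) • y j) = lam i • Ψ i)
    (hspan : Submodule.span ℝ (Set.range y) = Submodule.span ℝ (Set.range Ψ)) :
    ∀ ℓ : ℕ, 1 ≤ ℓ → ℓ ≤ r →
      (∑ j, α j * ‖y j - ∑ i : Fin r, if (i : ℕ) < ℓ then ⟪y j, Ψ i⟫ • Ψ i else 0‖ ^ 2) =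
        ∑ i : Fin r, if ℓ ≤ (i : ℕ) then lam i else 0 := by
  intro ℓ _ _
  set tail : Finset (Fin r) := univ.filter fun i => ℓ ≤ (i : ℕ)
  have hresidual : ∀ j, ‖y j - ∑ i : Fin r, if (i : ℕ) < ℓ then ⟪y j, Ψ i⟫ • Ψ i else 0‖ ^ 2 =
      ∑ i ∈ tail, ⟪y j, Ψ i⟫ ^ 2 := fun j => by
    have hy : y j ∈ Submodule.span ℝ (Set.range Ψ) := hspan ▸ Submodule.subset_span ⟨j, rfl⟩
    rw [← sum_filter, horth.norm_sub_sum_inner_smul_sq_of_mem_span hy, compl_filter]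
    simp only [tail, not_lt]
  have heigval : ∀ i, ∑ j, α j * ⟪y j, Ψ i⟫ ^ 2 = lam i := fun i =>
    sum_mul_inner_sq_eq_of_snapshotCorrelation_eq_smul (horth.norm_eq_one i) (heig i)
  simp only [hresidual, mul_sum]
  rw [sum_comm, ← sum_filter]
  exact sum_congr rfl fun i _ => heigval i

/-- POD projection error formula: the weighted squared error of projecting the snapshots
onto the first `ℓ` POD modes equals the sum of the remaining eigenvalues. -/
theorem stmt7 {X : Type*} [NormedAddCommGroup X] [InnerProductSpace ℝ X] [CompleteSpace X]
    {n r : ℕ} (y : Fin n → X) (α : Fin n → ℝ) (hα : ∀ j, 0 < α j)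
    (Ψ : Fin r → X) (lam : Fin r → ℝ)
    (horth : Orthonormal ℝ Ψ)
    (hpos : ∀ i, 0 < lam i)
    (hmono : ∀ i j : Fin r, i ≤ j → lam j ≤ lam i)
    (heig : ∀ i, (∑ j, (α j * ⟪Ψ i, y j⟫) • y j) = lam i • Ψ i)
    (hspan : Submodule.span ℝ (Set.range y) = Submodule.span ℝ (Set.range Ψ)) :
    ∀ ℓ : ℕ, 1 ≤ ℓ → ℓ ≤ r →
      (∑ j, α j * ‖y j - ∑ i : Fin r, if (i : ℕ) < ℓ then ⟪y j, Ψ i⟫ • Ψ i else 0‖ ^ 2) =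
        ∑ i : Fin r, if ℓ ≤ (i : ℕ) then lam i else 0 :=
  stmt7_general y α Ψ lam horth heig hspan
end

section
/- Let {Ψᵢ}_{i=1}^r be orthonormal eigenvectors of R with eigenvalues λ₁ ≥ … ≥ λ_r > 0 spanning the snapshot space, and let {ψᵢ}_{i=1}^ℓ be any orthonormal family in X with ℓ ≤ r. Then ∑_{i=1}^ℓ ∑_{j=1}^n αⱼ |⟨yⱼ, ψᵢ⟩_X|² ≤ ∑_{i=1}^ℓ λᵢ, i.e. the POD basis of rank ℓ maximizes the weighted captured information among all orthonormal families of size ℓ. -/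
open RealInnerProductSpace

lemma aux_kyfan {r ℓ : ℕ} (hℓ : ℓ ≤ r) (lam t : Fin r → ℝ)
    (hpos : ∀ i, 0 < lam i)
    (hmono : ∀ i j : Fin r, i ≤ j → lam j ≤ lam i)
    (ht0 : ∀ i, 0 ≤ t i) (ht1 : ∀ i, t i ≤ 1)
    (hsum : ∑ i, t i ≤ (ℓ : ℝ)) :
    ∑ i, lam i * t i ≤ ∑ i : Fin r, if (i : ℕ) < ℓ then lam i else 0 := by
  rcases Nat.eq_zero_or_pos ℓ with h0 | h0
  · subst h0
    have hz := (Finset.sum_eq_zero_iff_of_nonneg (fun i (_ : i ∈ Finset.univ) => ht0 i)).1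
      (le_antisymm (by simpa using hsum) (Finset.sum_nonneg fun i _ => ht0 i))
    simp only [Nat.not_lt_zero, if_false, Finset.sum_const_zero]
    exact le_of_eq (Finset.sum_eq_zero fun i hi => by rw [hz i hi, mul_zero])
  · set m : Fin r := ⟨ℓ - 1, by omega⟩ with hm
    have hcard : ∑ i : Fin r, (if (i : ℕ) < ℓ then (1 : ℝ) else 0) = (ℓ : ℝ) := by
      rw [Fin.sum_univ_eq_sum_range (fun i => if i < ℓ then (1 : ℝ) else 0) r]
      have hr : Finset.range ℓ ⊆ Finset.range r := Finset.range_subset_range.2 hℓ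
      rw [← Finset.sum_subset hr (by intro x hx hnx; simp at hx hnx ⊢; omega)]
      have he : ∀ x ∈ Finset.range ℓ, (if x < ℓ then (1:ℝ) else 0) = 1 :=
        fun x hx => by simp at hx; simp [hx]
      rw [Finset.sum_congr rfl he, Finset.sum_const, Finset.card_range]
      simp
    have key : ∀ i : Fin r, lam i * t i - (if (i : ℕ) < ℓ then lam i else 0)
        ≤ lam m * (t i - (if (i : ℕ) < ℓ then (1 : ℝ) else 0)) := by
      intro i
      by_cases h : (i : ℕ) < ℓ
      · simp only [h, if_true]
        have h1 : lam m ≤ lam i := hmono i m (by simp [hm, Fin.le_def]; omega)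
        nlinarith [ht1 i]
      · simp only [h, if_false]
        have h1 : lam i ≤ lam m := hmono m i (by simp [hm, Fin.le_def]; omega)
        nlinarith [ht0 i]
    have h2 : ∑ i, (lam i * t i - (if (i : ℕ) < ℓ then lam i else 0))
        ≤ ∑ i, lam m * (t i - (if (i : ℕ) < ℓ then (1 : ℝ) else 0)) :=
      Finset.sum_le_sum fun i _ => key i
    rw [Finset.sum_sub_distrib] at h2
    have h3 : ∑ i, lam m * (t i - (if (i : ℕ) < ℓ then (1 : ℝ) else 0))
        = lam m * ((∑ i, t i) - (ℓ : ℝ)) := by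
      rw [← Finset.mul_sum, Finset.sum_sub_distrib, hcard]
    rw [h3] at h2
    nlinarith [hpos m, h2]


/-- Optimality of the POD basis: any orthonormal family of size `ℓ ≤ r` captures at most
`∑_{i=1}^ℓ λᵢ` of the weighted information. -/
theorem stmt9 {X : Type*} [NormedAddCommGroup X] [InnerProductSpace ℝ X] [CompleteSpace X]
    {n r : ℕ} (y : Fin n → X) (α : Fin n → ℝ) (hα : ∀ j, 0 < α j)
    (Ψ : Fin r → X) (lam : Fin r → ℝ)
    (horth : Orthonormal ℝ Ψ)
    (hpos : ∀ i, 0 < lam i)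
    (hmono : ∀ i j : Fin r, i ≤ j → lam j ≤ lam i)
    (heig : ∀ i, (∑ j, (α j * ⟪Ψ i, y j⟫) • y j) = lam i • Ψ i)
    (hspan : Submodule.span ℝ (Set.range y) = Submodule.span ℝ (Set.range Ψ)) :
    ∀ (ℓ : ℕ) (hℓ : ℓ ≤ r) (ψ : Fin ℓ → X), Orthonormal ℝ ψ →
      (∑ i : Fin ℓ, ∑ j, α j * |⟪y j, ψ i⟫| ^ 2) ≤
        ∑ i : Fin r, if (i : ℕ) < ℓ then lam i else 0 := by
  intro ℓ hℓ ψ hψ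
  -- decompose the snapshots in the eigenbasis
  have hy : ∀ j, ∃ d : Fin r → ℝ, ∑ i, d i • Ψ i = y j := by
    intro j
    have : y j ∈ Submodule.span ℝ (Set.range Ψ) := by
      rw [← hspan]; exact Submodule.subset_span ⟨j, rfl⟩
    exact (Submodule.mem_span_range_iff_exists_fun ℝ).1 this
  choose d hd using hy
  have hdy : ∀ j i, ⟪y j, Ψ i⟫ = d j i := by
    intro j i
    rw [← hd j]
    simpa using horth.inner_left_fintype (d j) i
  set c : Fin r → Fin ℓ → ℝ := fun i k => ⟪Ψ i, ψ k⟫ with hc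
  have hM : ∀ i i' : Fin r, ∑ j, α j * (d j i * d j i') = if i = i' then lam i else 0 := by
    intro i i'
    have h := congrArg (fun x => ⟪x, Ψ i'⟫) (heig i)
    simp only [sum_inner, real_inner_smul_left] at h
    have horthe : ⟪Ψ i, Ψ i'⟫ = if i = i' then (1 : ℝ) else 0 :=
      orthonormal_iff_ite.mp horth i i'
    rw [horthe] at h
    have h2 : (if i = i' then lam i else 0) = lam i * if i = i' then (1:ℝ) else 0 := by
      split <;> simp
    rw [h2, ← h]
    refine Finset.sum_congr rfl fun j _ => ?_
    rw [real_inner_comm (y j) (Ψ i), hdy, hdy]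
    ring
  have hinner : ∀ j k, ⟪y j, ψ k⟫ = ∑ i, d j i * c i k := by
    intro j k
    rw [← hd j, sum_inner]
    refine Finset.sum_congr rfl fun i _ => ?_
    rw [real_inner_smul_left]
  have hkey : ∀ k, ∑ j, α j * |⟪y j, ψ k⟫| ^ 2 = ∑ i, lam i * (c i k) ^ 2 := by
    intro k
    calc ∑ j, α j * |⟪y j, ψ k⟫| ^ 2
        = ∑ j, ∑ i, ∑ i', (α j * (d j i * d j i')) * (c i k * c i' k) := by
          refine Finset.sum_congr rfl fun j _ => ?_
          rw [sq_abs, hinner j k, sq, Finset.sum_mul_sum, Finset.mul_sum]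
          refine Finset.sum_congr rfl fun i _ => ?_
          rw [Finset.mul_sum]
          exact Finset.sum_congr rfl fun i' _ => by ring
      _ = ∑ i, ∑ i', (∑ j, α j * (d j i * d j i')) * (c i k * c i' k) := by
          rw [Finset.sum_comm]
          refine Finset.sum_congr rfl fun i _ => ?_
          rw [Finset.sum_comm]
          refine Finset.sum_congr rfl fun i' _ => ?_
          rw [Finset.sum_mul]
      _ = ∑ i, ∑ i', (if i = i' then lam i else 0) * (c i k * c i' k) := by
          refine Finset.sum_congr rfl fun i _ => Finset.sum_congr rfl fun i' _ => ?_
          rw [hM]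
      _ = ∑ i, lam i * (c i k) ^ 2 := by
          refine Finset.sum_congr rfl fun i _ => ?_
          simp only [ite_mul, zero_mul, Finset.sum_ite_eq, Finset.mem_univ, if_true]
          ring
  set t : Fin r → ℝ := fun i => ∑ k, (c i k) ^ 2 with htdef
  have hLHS : (∑ i : Fin ℓ, ∑ j, α j * |⟪y j, ψ i⟫| ^ 2) = ∑ i, lam i * t i := by
    rw [Finset.sum_congr rfl fun k _ => hkey k, Finset.sum_comm]
    exact Finset.sum_congr rfl fun i _ => by rw [htdef, Finset.mul_sum]
  rw [hLHS]
  refine aux_kyfan hℓ lam t hpos hmono (fun i => Finset.sum_nonneg fun k _ => sq_nonneg _)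
    (fun i => ?_) ?_
  · have := hψ.sum_inner_products_le (Ψ i) (s := Finset.univ)
    have h1 : ‖Ψ i‖ = 1 := horth.1 i
    calc t i = ∑ k, ‖⟪ψ k, Ψ i⟫‖ ^ 2 := by
          refine Finset.sum_congr rfl fun k _ => ?_
          rw [Real.norm_eq_abs, sq_abs, hc, real_inner_comm]
      _ ≤ ‖Ψ i‖ ^ 2 := this
      _ = 1 := by rw [h1]; norm_num
  · have hb : ∀ k, ∑ i, (c i k) ^ 2 ≤ 1 := by
      intro k
      have := horth.sum_inner_products_le (ψ k) (s := Finset.univ)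
      have h1 : ‖ψ k‖ = 1 := hψ.1 k
      calc ∑ i, (c i k) ^ 2 = ∑ i, ‖⟪Ψ i, ψ k⟫‖ ^ 2 := by
            refine Finset.sum_congr rfl fun i _ => by rw [Real.norm_eq_abs, sq_abs]
        _ ≤ ‖ψ k‖ ^ 2 := this
        _ = 1 := by rw [h1]; norm_num
    calc ∑ i, t i = ∑ k, ∑ i, (c i k) ^ 2 := Finset.sum_comm
      _ ≤ ∑ _k : Fin ℓ, (1 : ℝ) := Finset.sum_le_sum fun k _ => hb k
      _ = (ℓ : ℝ) := by simp
end
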